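/- arXiv:2301.03186 — 5 statements merged into one kernel-verified Lean document; each statement's English description precedes it below -/
import Mathlib

section
/- Fix a real L > 1 and reals y_0, y_1 with log(1 − 1/L) < y_0 < y_1, and fix any y > y_0. Let Y_1, …, Y_n be reals with y_0 ≤ Y_i ≤ y_1 for all i. Then n·(a_0·m_2 + b_0·m_1 + c_0) ≤ Σ_{i=1}^n log(1 + L·(e^{Y_i} − 1)), where a_0, b_0, c_0 are the quadratic coefficients determined by L, y and y_0. (This is the lower bound of Theorem 1; the supremum over y > y_0 of the left side is therefore also a lower bound.) -/
/-!
Write `F t = log (1 + L (eᵗ - 1))` and `q t = a t² + b t + c`. The coefficients are chosen so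
that `q` interpolates `F` at `y₀` and `y` and is tangent to it at `y`. On `t > log (1 - 1/L)`
the derivative `F' t = 1 + (L - 1) / (L eᵗ - (L - 1))` is convex, hence so is `(F - q)'`.
By Rolle, `(F - q)'` vanishes at some `ξ ∈ (y₀, y)` besides `y`, so by convexity it is `≥ 0`
on `[y₀, ξ]`, `≤ 0` on `[ξ, y]` and `≥ 0` on `[y, ∞)`. As `F - q` vanishes at `y₀` and `y`,
it is nonnegative on `[y₀, ∞)`. Summing `q (Y i) ≤ F (Y i)` over `i` gives the bound.
-/

open Real Set

lemma le_of_hasDerivAt_nonneg {H H' : ℝ → ℝ} {a b : ℝ} (hab : a ≤ b)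
    (hH : ∀ t ∈ Icc a b, HasDerivAt H (H' t) t) (hH' : ∀ t ∈ Ioo a b, 0 ≤ H' t) :
    H a ≤ H b := by
  refine monotoneOn_of_hasDerivWithinAt_nonneg (f' := H') (convex_Icc a b)
    (fun t ht ↦ (hH t ht).continuousAt.continuousWithinAt) (fun t ht ↦ ?_) ?_
    (left_mem_Icc.2 hab) (right_mem_Icc.2 hab) hab
  · exact (hH t (interior_subset ht)).hasDerivWithinAt
  · rwa [interior_Icc]

theorem nonneg_of_convexOn_deriv {H H' : ℝ → ℝ} {y₀ y : ℝ} (hy₀y : y₀ < y)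
    (hH : ∀ t, y₀ ≤ t → HasDerivAt H (H' t) t) (hH' : ConvexOn ℝ (Ici y₀) H')
    (hHy₀ : H y₀ = 0) (hHy : H y = 0) (hH'y : H' y = 0) {t : ℝ} (ht : y₀ ≤ t) : 0 ≤ H t := by
  obtain ⟨ξ, ⟨hy₀ξ, hξy⟩, hH'ξ⟩ := exists_hasDerivAt_eq_zero hy₀y
    (fun u hu ↦ (hH u hu.1).continuousAt.continuousWithinAt) (hHy₀.trans hHy.symm)
    (fun u hu ↦ hH u hu.1.le)
  have hξ : ξ ∈ Ici y₀ := hy₀ξ.le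
  have hy : y ∈ Ici y₀ := hy₀y.le
  rcases le_total t ξ with htξ | hξt
  · rw [← hHy₀]
    refine le_of_hasDerivAt_nonneg ht (fun u hu ↦ hH u hu.1) fun u hu ↦ ?_
    simpa [hH'ξ] using hH'.le_left_of_right_le'' hu.1.le hy (hu.2.le.trans htξ) hξy
      (by rw [hH'ξ, hH'y])
  rcases le_total t y with hty | hyt
  · rw [← hHy, ← neg_le_neg_iff]
    refine le_of_hasDerivAt_nonneg (H := fun u ↦ -H u) (H' := fun u ↦ -H' u) hty
      (fun u hu ↦ (hH u (hy₀ξ.le.trans (hξt.trans hu.1))).neg) fun u hu ↦ ?_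
    have hu' : u ∈ segment ℝ ξ y := by
      rw [segment_eq_Icc hξy.le]; exact ⟨hξt.trans hu.1.le, hu.2.le⟩
    simpa [hH'ξ, hH'y] using hH'.le_on_segment hξ hy hu'
  · rw [← hHy]
    refine le_of_hasDerivAt_nonneg hyt (fun u hu ↦ hH u (hy₀y.le.trans hu.1)) fun u hu ↦ ?_
    simpa [hH'y] using hH'.le_right_of_left_le'' hξ (hy.trans hu.1.le) hξy hu.1.le
      (by rw [hH'ξ, hH'y])

theorem quadratic_le_of_convexOn_deriv {f f' : ℝ → ℝ} {a b c y₀ y : ℝ} (hy₀y : y₀ < y)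
    (hf : ∀ t, y₀ ≤ t → HasDerivAt f (f' t) t) (hf' : ConvexOn ℝ (Ici y₀) f')
    (hy₀ : a * y₀ ^ 2 + b * y₀ + c = f y₀) (hy : a * y ^ 2 + b * y + c = f y)
    (hy' : 2 * a * y + b = f' y) {t : ℝ} (ht : y₀ ≤ t) : a * t ^ 2 + b * t + c ≤ f t := by
  have hq : ConcaveOn ℝ (Ici y₀) fun u ↦ 2 * a * u + b :=
    ((2 * a) • (LinearMap.id : ℝ →ₗ[ℝ] ℝ)).concaveOn (convex_Ici y₀) |>.add
      (concaveOn_const b (convex_Ici y₀))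
  refine sub_nonneg.1 <|
    nonneg_of_convexOn_deriv (H := fun u ↦ f u - (a * u ^ 2 + b * u + c)) hy₀y
    (fun u hu ↦ ((hf u hu).sub ((((hasDerivAt_pow 2 u).const_mul a).add
      ((hasDerivAt_id' u).const_mul b)).add_const c)).congr_deriv (by simp; ring)) (hf'.sub hq)
    (by simp [hy₀]) (by simp [hy]) (by simp [← hy']) ht

lemma quadratic_interpolation {y₀ y f₀ f₁ d a b c : ℝ} (hy₀y : y₀ ≠ y)
    (ha : a = 1 / (y - y₀) * ((f₀ - f₁) / (y - y₀) + d)) (hb : b = d - 2 * a * y)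
    (hc : c = f₀ - a * y₀ ^ 2 - b * y₀) : a * y ^ 2 + b * y + c = f₁ := by
  have : y - y₀ ≠ 0 := sub_ne_zero.2 hy₀y.symm
  subst hc hb ha
  field_simp
  ring

lemma one_add_mul_exp_sub_one_pos {L t : ℝ} (hL : 1 < L) (ht : log (1 - 1 / L) < t) :
    0 < 1 + L * (exp t - 1) := by
  have hL₀ : 0 < L := by linarith
  have h : 1 - 1 / L < exp t :=
    (log_lt_iff_lt_exp (by rw [sub_pos, div_lt_one hL₀]; exact hL)).1 ht
  have : L * (1 - 1 / L) = L - 1 := by field_simp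
  nlinarith

noncomputable def leveragedLogReturn (L t : ℝ) : ℝ := log (1 + L * (exp t - 1))

lemma hasDerivAt_one_add_mul_exp_sub_one (L t : ℝ) :
    HasDerivAt (fun u ↦ 1 + L * (exp u - 1)) (L * exp t) t :=
  (((hasDerivAt_exp t).sub_const 1).const_mul L).const_add 1

lemma hasDerivAt_leveragedLogReturn {L t : ℝ} (hL : 1 < L) (ht : log (1 - 1 / L) < t) :
    HasDerivAt (leveragedLogReturn L) (L * exp t / (1 + L * (exp t - 1))) t :=
  (hasDerivAt_one_add_mul_exp_sub_one L t).log (one_add_mul_exp_sub_one_pos hL ht).ne'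

lemma convexOn_deriv_leveragedLogReturn {L : ℝ} (hL : 1 < L) :
    ConvexOn ℝ (Ioi (log (1 - 1 / L))) fun t ↦ L * exp t / (1 + L * (exp t - 1)) := by
  have hG := hasDerivAt_one_add_mul_exp_sub_one L
  refine convexOn_of_hasDerivWithinAt2_nonneg (convex_Ioi _)
    (f' := fun t ↦ L * (1 - L) * exp t / (1 + L * (exp t - 1)) ^ 2)
    (f'' := fun t ↦ L * (L - 1) * exp t * (L * exp t + (L - 1)) / (1 + L * (exp t - 1)) ^ 3)
    (fun t ht ↦ ?_) (fun t ht ↦ ?_) (fun t ht ↦ ?_) (fun t ht ↦ ?_) <;>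
    simp only [interior_Ioi, mem_Ioi] at ht ⊢ <;>
    have hGt := one_add_mul_exp_sub_one_pos hL ht
  · exact (((continuous_const.mul continuous_exp).continuousAt).div
      (hG t).continuousAt hGt.ne').continuousWithinAt
  · refine (((hasDerivAt_exp t).const_mul L).div (hG t) hGt.ne').congr_deriv ?_
      |>.hasDerivWithinAt
    field_simp
    ring
  · refine (((hasDerivAt_exp t).const_mul (L * (1 - L))).div ((hG t).pow 2)
      (pow_ne_zero 2 hGt.ne')).congr_deriv ?_ |>.hasDerivWithinAt
    simp only [Pi.pow_apply]
    field_simp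
    ring
  · have : 0 < L - 1 := by linarith
    positivity

lemma card_mul_quadratic_of_moments {ι : Type*} [Fintype ι] (Y : ι → ℝ) (a b c : ℝ) :
    (Fintype.card ι : ℝ) * (a * (1 / Fintype.card ι * ∑ i, Y i ^ 2)
      + b * (1 / Fintype.card ι * ∑ i, Y i) + c) = ∑ i, (a * Y i ^ 2 + b * Y i + c) := by
  rcases isEmpty_or_nonempty ι with _ | _
  · simp
  · have : (Fintype.card ι : ℝ) ≠ 0 := Nat.cast_ne_zero.2 Fintype.card_ne_zero
    simp only [Finset.sum_add_distrib, ← Finset.mul_sum, Finset.sum_const, Finset.card_univ,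
      nsmul_eq_mul]
    field_simp

theorem quadratic_le_leveragedLogReturn {L y₀ y a b c t : ℝ} (hL : 1 < L)
    (hy₀ : log (1 - 1 / L) < y₀) (hy₀y : y₀ < y)
    (ha : a = (1 / (y - y₀)) *
      (log ((1 + L * (exp y₀ - 1)) / (1 + L * (exp y - 1))) / (y - y₀)
        + L * exp y / (1 + L * (exp y - 1))))
    (hb : b = L * exp y / (1 + L * (exp y - 1)) - 2 * a * y)
    (hc : c = log (1 + L * (exp y₀ - 1)) - a * y₀ ^ 2 - b * y₀) (ht : y₀ ≤ t) :
    a * t ^ 2 + b * t + c ≤ leveragedLogReturn L t := by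
  refine quadratic_le_of_convexOn_deriv hy₀y
    (fun u hu ↦ hasDerivAt_leveragedLogReturn hL (hy₀.trans_le hu))
    ((convexOn_deriv_leveragedLogReturn hL).subset (fun u hu ↦ hy₀.trans_le hu) (convex_Ici y₀))
    (by rw [hc, leveragedLogReturn]; ring) ?_ (by rw [hb]; ring) ht
  rw [log_div (one_add_mul_exp_sub_one_pos hL hy₀).ne'
    (one_add_mul_exp_sub_one_pos hL (hy₀.trans hy₀y)).ne'] at ha
  exact quadratic_interpolation hy₀y.ne ha hb hc

theorem stmt_0_general (L y0 y1 y : ℝ) (hL : 1 < L)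
    (h0 : Real.log (1 - 1 / L) < y0) (hy : y0 < y)
    (n : ℕ) (Y : Fin n → ℝ) (hY : ∀ i, y0 ≤ Y i ∧ Y i ≤ y1)
    (a b c m1 m2 : ℝ)
    (ha : a = (1 / (y - y0)) *
      (Real.log ((1 + L * (Real.exp y0 - 1)) / (1 + L * (Real.exp y - 1))) / (y - y0)
        + L * Real.exp y / (1 + L * (Real.exp y - 1))))
    (hb : b = L * Real.exp y / (1 + L * (Real.exp y - 1)) - 2 * a * y)
    (hc : c = Real.log (1 + L * (Real.exp y0 - 1)) - a * y0 ^ 2 - b * y0)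
    (hm1 : m1 = (1 / (n : ℝ)) * ∑ i, Y i)
    (hm2 : m2 = (1 / (n : ℝ)) * ∑ i, (Y i) ^ 2) :
    (n : ℝ) * (a * m2 + b * m1 + c) ≤ ∑ i, Real.log (1 + L * (Real.exp (Y i) - 1)) := by
  calc (n : ℝ) * (a * m2 + b * m1 + c) = ∑ i, (a * Y i ^ 2 + b * Y i + c) := by
        simpa only [Fintype.card_fin, hm1, hm2] using card_mul_quadratic_of_moments Y a b c
    _ ≤ ∑ i, leveragedLogReturn L (Y i) := Finset.sum_le_sum fun i _ ↦
        quadratic_le_leveragedLogReturn hL h0 hy ha hb hc (hY i).1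

theorem stmt_0 (L y0 y1 y : ℝ) (hL : 1 < L)
    (h0 : Real.log (1 - 1 / L) < y0) (h01 : y0 < y1) (hy : y0 < y)
    (n : ℕ) (Y : Fin n → ℝ) (hY : ∀ i, y0 ≤ Y i ∧ Y i ≤ y1)
    (a b c m1 m2 : ℝ)
    (ha : a = (1 / (y - y0)) *
      (Real.log ((1 + L * (Real.exp y0 - 1)) / (1 + L * (Real.exp y - 1))) / (y - y0)
        + L * Real.exp y / (1 + L * (Real.exp y - 1))))
    (hb : b = L * Real.exp y / (1 + L * (Real.exp y - 1)) - 2 * a * y)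
    (hc : c = Real.log (1 + L * (Real.exp y0 - 1)) - a * y0 ^ 2 - b * y0)
    (hm1 : m1 = (1 / (n : ℝ)) * ∑ i, Y i)
    (hm2 : m2 = (1 / (n : ℝ)) * ∑ i, (Y i) ^ 2) :
    (n : ℝ) * (a * m2 + b * m1 + c) ≤ ∑ i, Real.log (1 + L * (Real.exp (Y i) - 1)) :=
  stmt_0_general L y0 y1 y hL h0 hy n Y hY a b c m1 m2 ha hb hc hm1 hm2
end

section
/- Fix a real L with 0 < L < 1 and reals y_0, y_1 with y_0 < y_1 < log(1/L − 1), and fix any y with y_0 < y < log(1/L − 1). Let Y_1, …, Y_n be reals with y_0 ≤ Y_i ≤ y_1 for all i. Then n·(a_0·m_2 + b_0·m_1 + c_0) ≤ Σ_{i=1}^n log(1 + L·(e^{Y_i} − 1)), where a_0, b_0, c_0 are the quadratic coefficients determined by L, y and y_0. (This is the lower bound of Theorem 2.) -/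
/-!
Write `f(t) = log (1 + L (eᵗ - 1))`. The quadratic `q(t) = a t² + b t + c` is the one with
`q(y₀) = f(y₀)`, `q(y) = f(y)` and `q'(y) = f'(y)`, so `g = f - q` vanishes at `y₀` and `y` and
`g'` vanishes at `y`. Below `M = log (1/L - 1)` we have `f''' > 0`, so `g'` is convex there. By
Rolle `g'` also vanishes at some `ξ ∈ (y₀, y)`, and convexity of `g'` forces `g' ≥ 0` left of `ξ`,
`g' ≤ 0` on `[ξ, y]` and `g' ≥ 0` right of `y`. Hence `g` increases from `g(y₀) = 0`, decreases
to `g(y) = 0` and increases again, so `g ≥ 0` on `[y₀, M)`. Summing `q(Yᵢ) ≤ f(Yᵢ)` over the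
days gives the bound.
-/

open Real Set

theorem nonneg_of_convexOn_deriv_s2 {g g' : ℝ → ℝ} {s : Set ℝ}
    (hg : ∀ t, HasDerivAt g (g' t) t) (hg' : ConvexOn ℝ s g')
    {x y : ℝ} (hx : x ∈ s) (hy : y ∈ s) (hxy : x < y)
    (hgx : g x = 0) (hgy : g y = 0) (hg'y : g' y = 0)
    {t : ℝ} (ht : t ∈ s) (hxt : x ≤ t) : 0 ≤ g t := by
  have hcont : Continuous g := continuous_iff_continuousAt.2 fun u => (hg u).continuousAt
  have hmono : ∀ {u v}, u ≤ v → (∀ w ∈ Ioo u v, 0 ≤ g' w) → g u ≤ g v := fun huv hpos =>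
    monotoneOn_of_hasDerivWithinAt_nonneg (convex_Icc _ _) hcont.continuousOn
      (fun w _ => (hg w).hasDerivWithinAt) (by rwa [interior_Icc])
      ⟨le_rfl, huv⟩ ⟨huv, le_rfl⟩ huv
  have hanti : ∀ {u v}, u ≤ v → (∀ w ∈ Ioo u v, g' w ≤ 0) → g v ≤ g u := fun huv hneg =>
    antitoneOn_of_hasDerivWithinAt_nonpos (convex_Icc _ _) hcont.continuousOn
      (fun w _ => (hg w).hasDerivWithinAt) (by rwa [interior_Icc])
      ⟨le_rfl, huv⟩ ⟨huv, le_rfl⟩ huv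
  obtain ⟨ξ, ⟨hxξ, hξy⟩, hg'ξ⟩ :=
    exists_hasDerivAt_eq_zero hxy hcont.continuousOn (hgx.trans hgy.symm) fun u _ => hg u
  have hs : ∀ {u v}, u ∈ s → v ∈ s → Icc u v ⊆ s := fun hu hv => hg'.1.ordConnected.out hu hv
  have hξ : ξ ∈ s := hs hx hy ⟨hxξ.le, hξy.le⟩
  rcases le_or_gt t ξ with htξ | hξt
  · rw [← hgx]
    refine hmono hxt fun w hw => ?_
    have := hg'.le_left_of_right_le'' (hs hx ht ⟨hw.1.le, hw.2.le⟩) hy (hw.2.le.trans htξ) hξy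
      (by rw [hg'ξ, hg'y])
    linarith
  rcases le_or_gt t y with hty | hyt
  · rw [← hgy]
    refine hanti hty fun w hw => ?_
    have := hg'.le_on_segment hξ hy
      (by rw [segment_eq_Icc hξy.le]; exact ⟨(hξt.trans hw.1).le, hw.2.le⟩)
    rwa [hg'ξ, hg'y, max_self] at this
  · rw [← hgy]
    refine hmono hyt.le fun w hw => ?_
    have := hg'.le_right_of_left_le'' hξ (hs hy ht ⟨hw.1.le, hw.2.le⟩) hξy hw.1.le
      (by rw [hg'ξ, hg'y])
    linarith

namespace Leveraged

noncomputable def growth (L t : ℝ) : ℝ := 1 + L * (exp t - 1)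

noncomputable def logGrowth (L t : ℝ) : ℝ := log (growth L t)

noncomputable def logGrowthDeriv (L t : ℝ) : ℝ := L * exp t / growth L t

noncomputable def logGrowthDeriv2 (L t : ℝ) : ℝ := L * (1 - L) * exp t / growth L t ^ 2

variable {L : ℝ}

theorem growth_pos (hL0 : 0 ≤ L) (hL1 : L ≤ 1) (t : ℝ) : 0 < growth L t := by
  rcases hL0.eq_or_lt with rfl | hL
  · simp [growth]
  · unfold growth
    nlinarith [mul_pos hL (exp_pos t)]

theorem hasDerivAt_growth (L t : ℝ) : HasDerivAt (growth L) (L * exp t) t :=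
  (((hasDerivAt_exp t).sub_const 1).const_mul L).const_add 1

theorem hasDerivAt_logGrowth (hL0 : 0 ≤ L) (hL1 : L ≤ 1) (t : ℝ) :
    HasDerivAt (logGrowth L) (logGrowthDeriv L t) t :=
  (hasDerivAt_growth L t).log (growth_pos hL0 hL1 t).ne'

theorem hasDerivAt_logGrowthDeriv (hL0 : 0 ≤ L) (hL1 : L ≤ 1) (t : ℝ) :
    HasDerivAt (logGrowthDeriv L) (logGrowthDeriv2 L t) t := by
  have hG := (growth_pos hL0 hL1 t).ne'
  refine (((hasDerivAt_exp t).const_mul L).div (hasDerivAt_growth L t) hG).congr_deriv ?_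
  unfold logGrowthDeriv2
  field_simp
  simp only [growth]
  ring

theorem hasDerivAt_logGrowthDeriv2 (hL0 : 0 ≤ L) (hL1 : L ≤ 1) (t : ℝ) :
    HasDerivAt (logGrowthDeriv2 L)
      (L * (1 - L) * exp t * (1 - L - L * exp t) / growth L t ^ 3) t := by
  have hG := (growth_pos hL0 hL1 t).ne'
  refine (((hasDerivAt_exp t).const_mul (L * (1 - L))).div
    ((hasDerivAt_growth L t).pow 2) (pow_ne_zero 2 hG)).congr_deriv ?_
  simp only [Pi.pow_apply]
  field_simp
  simp only [growth]
  ring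

/-- `log (1/L - 1)` is the inflection point of the logistic curve `logGrowthDeriv L`. -/
theorem convexOn_logGrowthDeriv (hL0 : 0 < L) (hL1 : L < 1) :
    ConvexOn ℝ (Iio (log (1 / L - 1))) (logGrowthDeriv L) := by
  refine convexOn_of_hasDerivWithinAt2_nonneg (convex_Iio _)
    (fun t _ => (hasDerivAt_logGrowthDeriv hL0.le hL1.le t).continuousAt.continuousWithinAt)
    (fun t _ => (hasDerivAt_logGrowthDeriv hL0.le hL1.le t).hasDerivWithinAt)
    (fun t _ => (hasDerivAt_logGrowthDeriv2 hL0.le hL1.le t).hasDerivWithinAt) fun t ht => ?_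
  have hM : 0 < 1 / L - 1 := by rw [one_div, sub_pos]; exact one_lt_inv_iff₀.2 ⟨hL0, hL1⟩
  rw [interior_Iio, mem_Iio, lt_log_iff_exp_lt hM, lt_sub_iff_add_lt, lt_div_iff₀ hL0] at ht
  have := growth_pos hL0.le hL1.le t
  have : 0 < 1 - L := by linarith
  have : 0 < 1 - L - L * exp t := by linarith
  positivity

theorem quadratic_le_logGrowth (hL0 : 0 < L) (hL1 : L < 1) {y0 y a b c : ℝ} (hy0 : y0 < y)
    (hy : y < log (1 / L - 1))
    (ha : a = (1 / (y - y0)) * (log (growth L y0 / growth L y) / (y - y0) + logGrowthDeriv L y))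
    (hb : b = logGrowthDeriv L y - 2 * a * y) (hc : c = logGrowth L y0 - a * y0 ^ 2 - b * y0)
    {t : ℝ} (ht0 : y0 ≤ t) (ht : t < log (1 / L - 1)) :
    a * t ^ 2 + b * t + c ≤ logGrowth L t := by
  have hquad : ∀ t, HasDerivAt (fun t => a * t ^ 2 + b * t + c) (2 * a * t + b) t := fun t => by
    simpa [mul_comm, mul_left_comm] using
      (((hasDerivAt_pow 2 t).const_mul a).add ((hasDerivAt_id t).const_mul b)).add_const c
  have hconv : ConvexOn ℝ (Iio (log (1 / L - 1))) fun t => logGrowthDeriv L t - (2 * a * t + b) :=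
    (convexOn_logGrowthDeriv hL0 hL1).sub
      (((LinearMap.mul ℝ ℝ (2 * a)).concaveOn (convex_Iio _)).add_const b)
  have haq : a * (y - y0) ^ 2 = logGrowth L y0 - logGrowth L y + logGrowthDeriv L y * (y - y0) := by
    rw [ha, log_div (growth_pos hL0.le hL1.le y0).ne' (growth_pos hL0.le hL1.le y).ne']
    unfold logGrowth
    field_simp [sub_ne_zero.2 hy0.ne']
  have := nonneg_of_convexOn_deriv_s2 (g := fun t => logGrowth L t - (a * t ^ 2 + b * t + c))
    (fun t => (hasDerivAt_logGrowth hL0.le hL1.le t).sub (hquad t)) hconv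
    (hy0.trans hy) hy hy0 (by rw [hc]; ring) (by rw [hc, hb]; linear_combination haq)
    (by rw [hb]; ring) ht ht0
  linarith

end Leveraged

theorem sum_quadratic_eq_mul_moments {n : ℕ} (Y : Fin n → ℝ) (a b c : ℝ) :
    ∑ i, (a * Y i ^ 2 + b * Y i + c) =
      n * (a * ((1 / n) * ∑ i, Y i ^ 2) + b * ((1 / n) * ∑ i, Y i) + c) := by
  rcases Nat.eq_zero_or_pos n with rfl | hn
  · simp
  rw [Finset.sum_add_distrib, Finset.sum_add_distrib, ← Finset.mul_sum, ← Finset.mul_sum,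
    Finset.sum_const, Finset.card_univ, Fintype.card_fin, nsmul_eq_mul]
  field_simp

theorem stmt_2_general (L y0 y1 y : ℝ) (hL0 : 0 < L) (hL1 : L < 1)
    (h1 : y1 < Real.log (1 / L - 1)) (hy0 : y0 < y) (hy1 : y < Real.log (1 / L - 1))
    (n : ℕ) (Y : Fin n → ℝ) (hY : ∀ i, y0 ≤ Y i ∧ Y i ≤ y1)
    (a b c m1 m2 : ℝ)
    (ha : a = (1 / (y - y0)) *
      (Real.log ((1 + L * (Real.exp y0 - 1)) / (1 + L * (Real.exp y - 1))) / (y - y0)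
        + L * Real.exp y / (1 + L * (Real.exp y - 1))))
    (hb : b = L * Real.exp y / (1 + L * (Real.exp y - 1)) - 2 * a * y)
    (hc : c = Real.log (1 + L * (Real.exp y0 - 1)) - a * y0 ^ 2 - b * y0)
    (hm1 : m1 = (1 / (n : ℝ)) * ∑ i, Y i)
    (hm2 : m2 = (1 / (n : ℝ)) * ∑ i, (Y i) ^ 2) :
    (n : ℝ) * (a * m2 + b * m1 + c) ≤ ∑ i, Real.log (1 + L * (Real.exp (Y i) - 1)) := by
  rw [hm1, hm2, ← sum_quadratic_eq_mul_moments]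
  exact Finset.sum_le_sum fun i _ => Leveraged.quadratic_le_logGrowth hL0 hL1 hy0 hy1 ha hb hc
    (hY i).1 ((hY i).2.trans_lt h1)

theorem stmt_2 (L y0 y1 y : ℝ) (hL0 : 0 < L) (hL1 : L < 1)
    (h01 : y0 < y1) (h1 : y1 < Real.log (1 / L - 1)) (hy0 : y0 < y) (hy1 : y < Real.log (1 / L - 1))
    (n : ℕ) (Y : Fin n → ℝ) (hY : ∀ i, y0 ≤ Y i ∧ Y i ≤ y1)
    (a b c m1 m2 : ℝ)
    (ha : a = (1 / (y - y0)) *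
      (Real.log ((1 + L * (Real.exp y0 - 1)) / (1 + L * (Real.exp y - 1))) / (y - y0)
        + L * Real.exp y / (1 + L * (Real.exp y - 1))))
    (hb : b = L * Real.exp y / (1 + L * (Real.exp y - 1)) - 2 * a * y)
    (hc : c = Real.log (1 + L * (Real.exp y0 - 1)) - a * y0 ^ 2 - b * y0)
    (hm1 : m1 = (1 / (n : ℝ)) * ∑ i, Y i)
    (hm2 : m2 = (1 / (n : ℝ)) * ∑ i, (Y i) ^ 2) :
    (n : ℝ) * (a * m2 + b * m1 + c) ≤ ∑ i, Real.log (1 + L * (Real.exp (Y i) - 1)) :=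
  stmt_2_general L y0 y1 y hL0 hL1 h1 hy0 hy1 n Y hY a b c m1 m2 ha hb hc hm1 hm2
end

section
/- Fix a real L with 0 < L < 1 and reals y_0, y_1 with log(1/L − 1) < y_0 < y_1, and fix any y with log(1/L − 1) < y < y_1. Let Y_1, …, Y_n be reals with y_0 ≤ Y_i ≤ y_1 for all i. Then n·(a_1·m_2 + b_1·m_1 + c_1) ≤ Σ_{i=1}^n log(1 + L·(e^{Y_i} − 1)), where a_1, b_1, c_1 are the quadratic coefficients determined by L, y and y_1. (This is the lower bound of Theorem 3.) -/
/-!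
Let `f t = log (1 + L (eᵗ - 1))`. Its derivative `L eᵗ / (1 + L (eᵗ - 1)) = 1 / (1 + e^{-(t - t₀)})`
is the logistic sigmoid centred at `t₀ = log (1/L - 1)`, hence concave on `(t₀, ∞)`. The quadratic
`q t = a₁ t² + b₁ t + c₁` is tangent to `f` at `y` and meets it again at `y₁`, so `g = f - q`
vanishes at `y` and `y₁`, and `g'` is concave with `g' y = 0`. Rolle gives a second zero
`z ∈ (y, y₁)` of `g'`; concavity makes `g' ≤ 0` on `(t₀, y]`, `g' ≥ 0` on `[y, z]` and `g' ≤ 0` on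
`[z, ∞)`, so `g ≥ 0` on `(t₀, y₁]`. Summing `q (Yᵢ) ≤ f (Yᵢ)` over the days gives the bound.
-/

open Real Set

section ConcaveSign

variable {𝕜 : Type*} [Field 𝕜] [LinearOrder 𝕜] [IsStrictOrderedRing 𝕜] {s : Set 𝕜} {φ : 𝕜 → 𝕜}
  {x z t : 𝕜}

theorem ConcaveOn.nonpos_of_lt_of_eq_zero (hφ : ConcaveOn 𝕜 s φ) (ht : t ∈ s) (hz : z ∈ s)
    (htx : t < x) (hxz : x < z) (hφx : φ x = 0) (hφz : φ z = 0) : φ t ≤ 0 := by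
  have h := hφ.slope_anti_adjacent ht hz htx hxz
  rwa [hφx, hφz, sub_self, zero_div, zero_sub, neg_div, neg_nonneg,
    div_le_iff₀ (sub_pos.mpr htx), zero_mul] at h

theorem ConcaveOn.nonpos_of_gt_of_eq_zero (hφ : ConcaveOn 𝕜 s φ) (hx : x ∈ s) (ht : t ∈ s)
    (hxz : x < z) (hzt : z < t) (hφx : φ x = 0) (hφz : φ z = 0) : φ t ≤ 0 := by
  have h := hφ.slope_anti_adjacent hx ht hxz hzt
  rwa [hφx, hφz, sub_self, zero_div, sub_zero, div_le_iff₀ (sub_pos.mpr hzt), zero_mul] at h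

theorem ConcaveOn.nonneg_of_mem_Icc_of_eq_zero (hφ : ConcaveOn 𝕜 s φ) (hx : x ∈ s) (hz : z ∈ s)
    (ht : t ∈ Icc x z) (hφx : φ x = 0) (hφz : φ z = 0) : 0 ≤ φ t := by
  have h := hφ.ge_on_segment hx hz (segment_eq_Icc (ht.1.trans ht.2) ▸ ht)
  rwa [hφx, hφz, min_self] at h

end ConcaveSign

section DerivSign

variable {g g' : ℝ → ℝ} {u v : ℝ}

theorem le_of_hasDerivAt_nonneg_s4 (huv : u ≤ v) (hg : ∀ t ∈ Icc u v, HasDerivAt g (g' t) t)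
    (hg' : ∀ t ∈ Ioo u v, 0 ≤ g' t) : g u ≤ g v :=
  monotoneOn_of_hasDerivWithinAt_nonneg (convex_Icc u v)
    (fun t ht => (hg t ht).continuousAt.continuousWithinAt)
    (fun t ht => (hg t (interior_subset ht)).hasDerivWithinAt) (by rwa [interior_Icc])
    (left_mem_Icc.mpr huv) (right_mem_Icc.mpr huv) huv

theorem le_of_hasDerivAt_nonpos (huv : u ≤ v) (hg : ∀ t ∈ Icc u v, HasDerivAt g (g' t) t)
    (hg' : ∀ t ∈ Ioo u v, g' t ≤ 0) : g v ≤ g u :=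
  antitoneOn_of_hasDerivWithinAt_nonpos (convex_Icc u v)
    (fun t ht => (hg t ht).continuousAt.continuousWithinAt)
    (fun t ht => (hg t (interior_subset ht)).hasDerivWithinAt) (by rwa [interior_Icc])
    (left_mem_Icc.mpr huv) (right_mem_Icc.mpr huv) huv

end DerivSign

section TangentSecant

variable {s : Set ℝ} {y y₁ t : ℝ}

theorem nonneg_of_concaveOn_deriv (hs : Convex ℝ s) {g g' : ℝ → ℝ}
    (hg : ∀ r ∈ s, HasDerivAt g (g' r) r) (hg' : ConcaveOn ℝ s g') (hy : y ∈ s) (hy₁ : y₁ ∈ s)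
    (hyy₁ : y < y₁) (hgy : g y = 0) (hg'y : g' y = 0) (hgy₁ : g y₁ = 0) (ht : t ∈ s)
    (hty₁ : t ≤ y₁) : 0 ≤ g t := by
  have hsub : ∀ {u v}, u ∈ s → v ∈ s → Icc u v ⊆ s := fun hu hv => hs.ordConnected.out hu hv
  obtain ⟨z, ⟨hyz, hzy₁⟩, hg'z⟩ := exists_hasDerivAt_eq_zero hyy₁
    (fun r hr => (hg r (hsub hy hy₁ hr)).continuousAt.continuousWithinAt) (hgy.trans hgy₁.symm)
    (fun r hr => hg r (hsub hy hy₁ (Ioo_subset_Icc_self hr)))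
  have hz : z ∈ s := hsub hy hy₁ ⟨hyz.le, hzy₁.le⟩
  rcases le_or_gt t y with hty | hyt
  · rw [← hgy]
    exact le_of_hasDerivAt_nonpos hty (fun r hr => hg r (hsub ht hy hr)) fun r hr =>
      hg'.nonpos_of_lt_of_eq_zero (hsub ht hy (Ioo_subset_Icc_self hr)) hz hr.2 hyz hg'y hg'z
  rcases le_or_gt t z with htz | hzt
  · rw [← hgy]
    exact le_of_hasDerivAt_nonneg_s4 hyt.le (fun r hr => hg r (hsub hy ht hr)) fun r hr =>
      hg'.nonneg_of_mem_Icc_of_eq_zero hy hz ⟨hr.1.le, hr.2.le.trans htz⟩ hg'y hg'z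
  · rw [← hgy₁]
    exact le_of_hasDerivAt_nonpos hty₁ (fun r hr => hg r (hsub ht hy₁ hr)) fun r hr =>
      hg'.nonpos_of_gt_of_eq_zero hy (hsub ht hy₁ (Ioo_subset_Icc_self hr)) hyz
        (hzt.trans hr.1) hg'y hg'z

theorem quadratic_le_of_concaveOn_deriv (hs : Convex ℝ s) {f f' : ℝ → ℝ}
    (hf : ∀ r ∈ s, HasDerivAt f (f' r) r) (hf' : ConcaveOn ℝ s f') {a b c : ℝ} (hy : y ∈ s)
    (hy₁ : y₁ ∈ s) (hyy₁ : y < y₁) (hfy : a * y ^ 2 + b * y + c = f y)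
    (hf'y : 2 * a * y + b = f' y) (hfy₁ : a * y₁ ^ 2 + b * y₁ + c = f y₁) (ht : t ∈ s)
    (hty₁ : t ≤ y₁) : a * t ^ 2 + b * t + c ≤ f t := by
  have hq (r : ℝ) : HasDerivAt (fun r => a * r ^ 2 + b * r + c) (2 * a * r + b) r := by
    refine ((((hasDerivAt_pow 2 r).const_mul a).add
      ((hasDerivAt_id r).const_mul b)).add_const c).congr_deriv ?_
    push_cast
    ring
  have hg' : ConcaveOn ℝ s fun r => f' r - (2 * a * r + b) := by
    refine ⟨hs, fun u hu v hv μ ν hμ hν hμν => ?_⟩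
    have h := hf'.2 hu hv hμ hν hμν
    simp only [smul_eq_mul] at h ⊢
    linear_combination h - b * hμν
  have h := nonneg_of_concaveOn_deriv hs (g := fun r => f r - (a * r ^ 2 + b * r + c))
    (fun r hr => (hf r hr).sub (hq r)) hg' hy hy₁ hyy₁ (by simp [hfy]) (by simp [hf'y])
    (by simp [hfy₁]) ht hty₁
  exact sub_nonneg.mp h

end TangentSecant

theorem tangent_secant_coeffs {K : Type*} [Field K] {y y₁ v v₁ d a b c : K} (hy : y - y₁ ≠ 0)
    (ha : a = 1 / (y - y₁) * ((v₁ - v) / (y - y₁) + d)) (hb : b = d - 2 * a * y)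
    (hc : c = v₁ - a * y₁ ^ 2 - b * y₁) :
    a * y ^ 2 + b * y + c = v ∧ 2 * a * y + b = d ∧ a * y₁ ^ 2 + b * y₁ + c = v₁ := by
  have ha' : a * (y - y₁) ^ 2 = v₁ - v + d * (y - y₁) := by
    rw [ha]; field_simp
  refine ⟨?_, by rw [hb]; ring, by rw [hc]; ring⟩
  rw [hc, hb]
  linear_combination -ha'

theorem card_mul_quadratic_moments {ι : Type*} [Fintype ι] (Y : ι → ℝ) (a b c : ℝ) :
    (Fintype.card ι : ℝ) * (a * (1 / (Fintype.card ι : ℝ) * ∑ i, Y i ^ 2)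
      + b * (1 / (Fintype.card ι : ℝ) * ∑ i, Y i) + c) = ∑ i, (a * Y i ^ 2 + b * Y i + c) := by
  rcases isEmpty_or_nonempty ι with hι | hι
  · simp
  have hcard : (Fintype.card ι : ℝ) ≠ 0 := by positivity
  simp only [Finset.sum_add_distrib, ← Finset.mul_sum, Finset.sum_const, Finset.card_univ,
    nsmul_eq_mul]
  field_simp

noncomputable def leveragedGross (L t : ℝ) : ℝ := 1 + L * (exp t - 1)

section Leveraged

variable {L : ℝ}

theorem leveragedGross_eq (L t : ℝ) : leveragedGross L t = L * exp t + (1 - L) := by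
  unfold leveragedGross; ring

theorem leveragedGross_pos (hL0 : 0 ≤ L) (hL1 : L < 1) (t : ℝ) : 0 < leveragedGross L t := by
  rw [leveragedGross_eq]
  exact add_pos_of_nonneg_of_pos (by positivity) (sub_pos.mpr hL1)

theorem hasDerivAt_leveragedGross (L t : ℝ) : HasDerivAt (leveragedGross L) (L * exp t) t :=
  (((hasDerivAt_exp t).sub_const 1).const_mul L).const_add 1

theorem hasDerivAt_log_leveragedGross {t : ℝ} (ht : leveragedGross L t ≠ 0) :
    HasDerivAt (fun t => log (leveragedGross L t)) (L * exp t / leveragedGross L t) t :=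
  (hasDerivAt_leveragedGross L t).log ht

theorem hasDerivAt_mul_exp_div_leveragedGross {t : ℝ} (ht : leveragedGross L t ≠ 0) :
    HasDerivAt (fun t => L * exp t / leveragedGross L t)
      ((1 - L) * (L * exp t / leveragedGross L t ^ 2)) t := by
  refine (((hasDerivAt_exp t).const_mul L).div (hasDerivAt_leveragedGross L t) ht).congr_deriv ?_
  rw [leveragedGross_eq]
  ring

theorem div_add_sq_antitoneOn {D : ℝ} (hD : 0 < D) :
    AntitoneOn (fun u => u / (u + D) ^ 2) (Ici D) := by
  intro u hu v hv huv
  simp only [mem_Ici] at hu hv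
  rw [div_le_div_iff₀ (pow_pos (by linarith) 2) (pow_pos (by linarith) 2)]
  nlinarith [mul_nonneg (sub_nonneg.mpr huv) (show 0 ≤ u * v - D ^ 2 by nlinarith)]

theorem one_sub_lt_mul_exp (hL0 : 0 < L) (hL1 : L < 1) {t : ℝ} (ht : log (1 / L - 1) < t) :
    1 - L < L * exp t := by
  have hpos : 0 < 1 / L - 1 := by rw [sub_pos, lt_div_iff₀ hL0, one_mul]; exact hL1
  have h := mul_lt_mul_of_pos_left ((log_lt_iff_lt_exp hpos).mp ht) hL0
  rwa [mul_sub, mul_one_div_cancel hL0.ne', mul_one] at h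

theorem concaveOn_mul_exp_div_leveragedGross (hL0 : 0 < L) (hL1 : L < 1) :
    ConcaveOn ℝ (Ioi (log (1 / L - 1))) fun t => L * exp t / leveragedGross L t := by
  have hd (t : ℝ) := hasDerivAt_mul_exp_div_leveragedGross (leveragedGross_pos hL0.le hL1 t).ne'
  refine AntitoneOn.concaveOn_of_deriv (convex_Ioi _)
    (fun t _ => (hd t).continuousAt.continuousWithinAt)
    (fun t _ => (hd t).differentiableAt.differentiableWithinAt) ?_
  rw [interior_Ioi]
  intro s hs t ht hst
  rw [(hd s).deriv, (hd t).deriv, leveragedGross_eq, leveragedGross_eq]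
  refine mul_le_mul_of_nonneg_left ?_ (sub_pos.mpr hL1).le
  exact div_add_sq_antitoneOn (sub_pos.mpr hL1) (one_sub_lt_mul_exp hL0 hL1 hs).le
    (one_sub_lt_mul_exp hL0 hL1 ht).le (by gcongr)

end Leveraged

theorem stmt_4_general (L y0 y1 y : ℝ) (hL0 : 0 < L) (hL1 : L < 1)
    (h0 : Real.log (1 / L - 1) < y0) (hy0 : Real.log (1 / L - 1) < y) (hy1 : y < y1)
    (n : ℕ) (Y : Fin n → ℝ) (hY : ∀ i, y0 ≤ Y i ∧ Y i ≤ y1)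
    (a b c m1 m2 : ℝ)
    (ha : a = (1 / (y - y1)) *
      (Real.log ((1 + L * (Real.exp y1 - 1)) / (1 + L * (Real.exp y - 1))) / (y - y1)
        + L * Real.exp y / (1 + L * (Real.exp y - 1))))
    (hb : b = L * Real.exp y / (1 + L * (Real.exp y - 1)) - 2 * a * y)
    (hc : c = Real.log (1 + L * (Real.exp y1 - 1)) - a * y1 ^ 2 - b * y1)
    (hm1 : m1 = (1 / (n : ℝ)) * ∑ i, Y i)
    (hm2 : m2 = (1 / (n : ℝ)) * ∑ i, (Y i) ^ 2) :
    (n : ℝ) * (a * m2 + b * m1 + c) ≤ ∑ i, Real.log (1 + L * (Real.exp (Y i) - 1)) := by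
  have hpos := leveragedGross_pos hL0.le hL1
  have hlog : log ((1 + L * (exp y1 - 1)) / (1 + L * (exp y - 1)))
      = log (1 + L * (exp y1 - 1)) - log (1 + L * (exp y - 1)) :=
    log_div (hpos y1).ne' (hpos y).ne'
  rw [hlog] at ha
  obtain ⟨hfy, hf'y, hfy1⟩ := tangent_secant_coeffs (sub_ne_zero.mpr hy1.ne) ha hb hc
  have hbound (i : Fin n) : a * Y i ^ 2 + b * Y i + c ≤ log (1 + L * (exp (Y i) - 1)) :=
    quadratic_le_of_concaveOn_deriv (convex_Ioi _)
      (fun t _ => hasDerivAt_log_leveragedGross (hpos t).ne')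
      (concaveOn_mul_exp_div_leveragedGross hL0 hL1) hy0 (hy0.trans hy1) hy1 hfy hf'y hfy1
      (h0.trans_le (hY i).1) (hY i).2
  have hmean := card_mul_quadratic_moments Y a b c
  rw [Fintype.card_fin] at hmean
  rw [hm1, hm2, hmean]
  exact Finset.sum_le_sum fun i _ => hbound i

theorem stmt_4 (L y0 y1 y : ℝ) (hL0 : 0 < L) (hL1 : L < 1)
    (h0 : Real.log (1 / L - 1) < y0) (h01 : y0 < y1) (hy0 : Real.log (1 / L - 1) < y) (hy1 : y < y1)
    (n : ℕ) (Y : Fin n → ℝ) (hY : ∀ i, y0 ≤ Y i ∧ Y i ≤ y1)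
    (a b c m1 m2 : ℝ)
    (ha : a = (1 / (y - y1)) *
      (Real.log ((1 + L * (Real.exp y1 - 1)) / (1 + L * (Real.exp y - 1))) / (y - y1)
        + L * Real.exp y / (1 + L * (Real.exp y - 1))))
    (hb : b = L * Real.exp y / (1 + L * (Real.exp y - 1)) - 2 * a * y)
    (hc : c = Real.log (1 + L * (Real.exp y1 - 1)) - a * y1 ^ 2 - b * y1)
    (hm1 : m1 = (1 / (n : ℝ)) * ∑ i, Y i)
    (hm2 : m2 = (1 / (n : ℝ)) * ∑ i, (Y i) ^ 2) :
    (n : ℝ) * (a * m2 + b * m1 + c) ≤ ∑ i, Real.log (1 + L * (Real.exp (Y i) - 1)) :=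
  stmt_4_general L y0 y1 y hL0 hL1 h0 hy0 hy1 n Y hY a b c m1 m2 ha hb hc hm1 hm2
end

section
/- Fix a real L > 1 and reals y_0, y with log(1 − 1/L) < y_0 < y. Then the coefficient a_0 = (1/(y − y_0))·( log((1 + L·(e^{y_0} − 1))/(1 + L·(e^y − 1)))/(y − y_0) + L·e^y/(1 + L·(e^y − 1)) ) is strictly negative. -/
/-!
With `φ t = log (1 + L (eᵗ - 1))`, the logarithm in `a₀` is `φ y₀ - φ y` and the second summand
is `φ' y`, so `a₀ < 0` says that the chord slope of `φ` on `[y₀, y]` exceeds `φ' y`. This holds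
because `φ' t = L / (L - (L - 1) e⁻ᵗ)` is strictly decreasing for `L > 1`, i.e. `φ` is strictly
concave on `(log (1 - 1/L), ∞)`.
-/

open Real Set

namespace OneAddMulExpSubOne

variable {L : ℝ}

lemma pos_of_log_lt (hL : 1 < L) {t : ℝ} (ht : log (1 - 1 / L) < t) :
    0 < 1 + L * (exp t - 1) := by
  have hL0 : 0 < L := by linarith
  have hlt : 1 - 1 / L < exp t :=
    (log_lt_iff_lt_exp (sub_pos.2 ((div_lt_one hL0).2 hL))).1 ht
  have hfactor : 1 + L * (exp t - 1) = L * (exp t - (1 - 1 / L)) := by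
    field_simp
    ring
  rw [hfactor]
  exact mul_pos hL0 (sub_pos.2 hlt)

lemma hasDerivAt_log {t : ℝ} (ht : 0 < 1 + L * (exp t - 1)) :
    HasDerivAt (fun s ↦ log (1 + L * (exp s - 1))) (L * exp t / (1 + L * (exp t - 1))) t :=
  ((((hasDerivAt_exp t).sub_const 1).const_mul L).const_add 1).log ht.ne'

lemma strictAntiOn_deriv_log (hL : 1 < L) :
    StrictAntiOn (fun t ↦ L * exp t / (1 + L * (exp t - 1))) (Ioi (log (1 - 1 / L))) := by
  intro s hs t ht hst
  have hAs := pos_of_log_lt hL hs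
  have hAt := pos_of_log_lt hL ht
  dsimp only
  rw [div_lt_div_iff₀ hAt hAs]
  -- cross-multiplied, the difference of the two sides is `L (L - 1) (eˢ - eᵗ)`
  have key : L * (L - 1) * exp s < L * (L - 1) * exp t :=
    mul_lt_mul_of_pos_left (exp_lt_exp.2 hst) (mul_pos (by linarith) (by linarith))
  nlinarith

lemma strictConcaveOn_log (hL : 1 < L) :
    StrictConcaveOn ℝ (Ioi (log (1 - 1 / L))) (fun t ↦ log (1 + L * (exp t - 1))) := by
  have hderiv : ∀ t ∈ Ioi (log (1 - 1 / L)), HasDerivAt (fun s ↦ log (1 + L * (exp s - 1)))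
      (L * exp t / (1 + L * (exp t - 1))) t :=
    fun t ht ↦ hasDerivAt_log (pos_of_log_lt hL ht)
  refine StrictAntiOn.strictConcaveOn_of_deriv (convex_Ioi _)
    (fun t ht ↦ (hderiv t ht).continuousAt.continuousWithinAt) ?_
  rw [interior_Ioi]
  exact (strictAntiOn_deriv_log hL).congr fun t ht ↦ (hderiv t ht).deriv.symm

end OneAddMulExpSubOne

open OneAddMulExpSubOne in
theorem stmt_17 (L y0 y : ℝ) (hL : 1 < L)
    (h0 : Real.log (1 - 1 / L) < y0) (h0y : y0 < y) :
    (1 / (y - y0)) *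
      (Real.log ((1 + L * (Real.exp y0 - 1)) / (1 + L * (Real.exp y - 1))) / (y - y0)
        + L * Real.exp y / (1 + L * (Real.exp y - 1))) < 0 := by
  have hy : log (1 - 1 / L) < y := h0.trans h0y
  have hslope := (strictConcaveOn_log hL).lt_slope_of_hasDerivAt h0 hy h0y
    (hasDerivAt_log (pos_of_log_lt hL hy))
  rw [slope_def_field] at hslope
  rw [log_div (pos_of_log_lt hL h0).ne' (pos_of_log_lt hL hy).ne', ← neg_sub (log (1 + L * (exp y - 1))), neg_div]
  exact mul_neg_of_pos_of_neg (one_div_pos.2 (sub_pos.2 h0y)) (by linarith)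
end

section
/- Fix reals L > 1, L_0 < L, r ≥ 0, and y_0, y_1 with log(1 − 1/L) < y_0 < y_1, and fix any y > y_0. Let Y_1, …, Y_n be reals with y_0 ≤ Y_i ≤ y_1, set m_1 = (1/n)·Σ Y_i, m_2 = (1/n)·Σ Y_i², and s = sqrt(m_2 − m_1²). Let a_0, b_0, c_0 be the quadratic coefficients determined by L, y and y_0. If the radicand −m_1² + ((L_0 − b_0)/a_0)·m_1 − (c_0 − log(1 + r/252))/a_0 is nonnegative and s ≤ sqrt( −m_1² + ((L_0 − b_0)/a_0)·m_1 − (c_0 − log(1 + r/252))/a_0 ), then L_0·n·m_1 ≤ Σ_{i=1}^n log(1 + L·(e^{Y_i} − 1)) − n·log(1 + r/252); that is, the log-return of the L-times daily leveraged ETF with expense ratio r is at least L_0 times the log-return of the benchmark index. -/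
/-!
Write `f t = log (1 + L (eᵗ - 1))` and `q t = a t² + b t + c`: the coefficients are those of the
quadratic through `(y₀, f y₀)` that is tangent to `f` at `y`. Strict concavity of `f` gives `a < 0`.
Since `f''' > 0`, the derivative of `g = f - q` is convex; it vanishes at `y` and, by Rolle, at some
`ξ ∈ (y₀, y)`, so `g` increases on `[y₀, ξ]`, decreases on `[ξ, y]` and increases on `[y, ∞)`.
With `g y₀ = g y = 0` this gives `q ≤ f` on `[y₀, ∞)`. Summing over the days bounds the fund's
log-return below by `n (a m₂ + b m₁ + c - log (1 + r/252))`, and since `a < 0` the hypothesis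
`s² ≤ …` says exactly that this is at least `L₀ n m₁`.
-/

open Real Set Finset

lemma monotoneOn_of_forall_hasDerivAt_nonneg {s : Set ℝ} {f f' : ℝ → ℝ} (hs : Convex ℝ s)
    (hf : ∀ x ∈ s, HasDerivAt f (f' x) x) (hf' : ∀ x ∈ s, 0 ≤ f' x) : MonotoneOn f s :=
  monotoneOn_of_hasDerivWithinAt_nonneg hs (fun x hx ↦ (hf x hx).continuousAt.continuousWithinAt)
    (fun x hx ↦ (hf x (interior_subset hx)).hasDerivWithinAt) fun x hx ↦ hf' x (interior_subset hx)

lemma antitoneOn_of_forall_hasDerivAt_nonpos {s : Set ℝ} {f f' : ℝ → ℝ} (hs : Convex ℝ s)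
    (hf : ∀ x ∈ s, HasDerivAt f (f' x) x) (hf' : ∀ x ∈ s, f' x ≤ 0) : AntitoneOn f s :=
  antitoneOn_of_hasDerivWithinAt_nonpos hs (fun x hx ↦ (hf x hx).continuousAt.continuousWithinAt)
    (fun x hx ↦ (hf x (interior_subset hx)).hasDerivWithinAt) fun x hx ↦ hf' x (interior_subset hx)

lemma convexOn_of_forall_hasDerivAt_of_monotoneOn {s : Set ℝ} {f f' : ℝ → ℝ} (hs : Convex ℝ s)
    (hf : ∀ x ∈ s, HasDerivAt f (f' x) x) (hf' : MonotoneOn f' s) : ConvexOn ℝ s f :=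
  MonotoneOn.convexOn_of_deriv hs (fun x hx ↦ (hf x hx).continuousAt.continuousWithinAt)
    (fun x hx ↦ (hf x (interior_subset hx)).differentiableAt.differentiableWithinAt)
    ((hf'.mono interior_subset).congr fun x hx ↦ (hf x (interior_subset hx)).deriv.symm)

lemma ConvexOn.nonpos_of_mem_Icc {s : Set ℝ} {f : ℝ → ℝ} (hf : ConvexOn ℝ s f) {a b x : ℝ}
    (ha : a ∈ s) (hb : b ∈ s) (hfa : f a = 0) (hfb : f b = 0) (hx : x ∈ Icc a b) : f x ≤ 0 := by
  have h := hf.le_on_segment ha hb (by rwa [segment_eq_Icc (hx.1.trans hx.2)])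
  rwa [hfa, hfb, max_self] at h

lemma ConvexOn.nonneg_of_le_or_le {s : Set ℝ} {f : ℝ → ℝ} (hf : ConvexOn ℝ s f) {a b x : ℝ}
    (ha : a ∈ s) (hb : b ∈ s) (hx : x ∈ s) (hab : a < b) (hfa : f a = 0) (hfb : f b = 0)
    (hxab : x ≤ a ∨ b ≤ x) : 0 ≤ f x := by
  rcases hxab with hxa | hbx
  · obtain rfl | hxa := hxa.eq_or_lt
    · exact hfa.ge
    have h := hf.slope_mono_adjacent hx hb hxa hab
    rw [hfa, hfb, sub_self, zero_div, div_le_iff₀ (sub_pos.2 hxa)] at h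
    linarith
  · obtain rfl | hbx := hbx.eq_or_lt
    · exact hfb.ge
    have h := hf.slope_mono_adjacent ha hx hab hbx
    rw [hfa, hfb, sub_self, zero_div, le_div_iff₀ (sub_pos.2 hbx)] at h
    linarith

theorem nonneg_of_convexOn_deriv_s18 {g g' : ℝ → ℝ} {x₀ x₁ : ℝ} (h₀₁ : x₀ < x₁)
    (hg : ∀ x ∈ Ici x₀, HasDerivAt g (g' x) x) (hg' : ConvexOn ℝ (Ici x₀) g')
    (h₀ : g x₀ = 0) (h₁ : g x₁ = 0) (h₁' : g' x₁ = 0) {x : ℝ} (hx : x₀ ≤ x) : 0 ≤ g x := by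
  obtain ⟨ξ, ⟨hx₀ξ, hξx₁⟩, hξ⟩ := exists_hasDerivAt_eq_zero h₀₁
    (fun t ht ↦ (hg t ht.1).continuousAt.continuousWithinAt) (h₀.trans h₁.symm)
    fun t ht ↦ hg t ht.1.le
  have hξs : ξ ∈ Ici x₀ := hx₀ξ.le
  have hx₁s : x₁ ∈ Ici x₀ := h₀₁.le
  rcases le_total x ξ with hxξ | hξx
  · have hmono : MonotoneOn g (Icc x₀ ξ) :=
      monotoneOn_of_forall_hasDerivAt_nonneg (convex_Icc _ _) (fun t ht ↦ hg t ht.1)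
        fun t ht ↦ hg'.nonneg_of_le_or_le hξs hx₁s ht.1 hξx₁ hξ h₁' (.inl ht.2)
    exact h₀ ▸ hmono ⟨le_rfl, hx₀ξ.le⟩ ⟨hx, hxξ⟩ hx
  rcases le_total x x₁ with hxx₁ | hx₁x
  · have hanti : AntitoneOn g (Icc ξ x₁) :=
      antitoneOn_of_forall_hasDerivAt_nonpos (convex_Icc _ _)
        (fun t ht ↦ hg t (hx₀ξ.le.trans ht.1)) fun t ht ↦ hg'.nonpos_of_mem_Icc hξs hx₁s hξ h₁' ht
    exact h₁ ▸ hanti ⟨hξx, hxx₁⟩ ⟨hξx₁.le, le_rfl⟩ hxx₁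
  · have hmono : MonotoneOn g (Ici x₁) :=
      monotoneOn_of_forall_hasDerivAt_nonneg (convex_Ici _) (fun t ht ↦ hg t (h₀₁.le.trans ht))
        fun t ht ↦ hg'.nonneg_of_le_or_le hξs hx₁s (h₀₁.le.trans ht) hξx₁ hξ h₁' (.inr ht)
    exact h₁ ▸ hmono self_mem_Ici hx₁x hx₁x

namespace LeveragedETF

noncomputable def logReturn (L t : ℝ) : ℝ := log (1 + L * (exp t - 1))

noncomputable def logReturnDeriv (L t : ℝ) : ℝ := L * exp t / (1 + L * (exp t - 1))

noncomputable def logReturnDeriv2 (L t : ℝ) : ℝ :=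
  -((L - 1) * (L * exp t)) / (1 + L * (exp t - 1)) ^ 2

variable {L s t : ℝ}

lemma one_add_mul_exp_sub_one_pos (hL : 1 < L) (ht : log (1 - 1 / L) < t) :
    0 < 1 + L * (exp t - 1) := by
  have hL₀ : 0 < L := by linarith
  have h : 1 - 1 / L < exp t :=
    (log_lt_iff_lt_exp (by rw [sub_pos, div_lt_one hL₀]; exact hL)).1 ht
  have := mul_lt_mul_of_pos_left h hL₀
  rw [mul_sub, mul_one_div_cancel hL₀.ne'] at this
  linarith

lemma hasDerivAt_one_add_mul_exp_sub_one (L t : ℝ) :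
    HasDerivAt (fun t ↦ 1 + L * (exp t - 1)) (L * exp t) t := by
  simpa using (((hasDerivAt_exp t).sub_const 1).const_mul L).const_add 1

lemma hasDerivAt_logReturn (hL : 1 < L) (ht : log (1 - 1 / L) < t) :
    HasDerivAt (logReturn L) (logReturnDeriv L t) t :=
  (hasDerivAt_one_add_mul_exp_sub_one L t).log (one_add_mul_exp_sub_one_pos hL ht).ne'

lemma hasDerivAt_logReturnDeriv (hL : 1 < L) (ht : log (1 - 1 / L) < t) :
    HasDerivAt (logReturnDeriv L) (logReturnDeriv2 L t) t := by
  have hP := (one_add_mul_exp_sub_one_pos hL ht).ne'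
  refine (((hasDerivAt_exp t).const_mul L).div (hasDerivAt_one_add_mul_exp_sub_one L t)
    hP).congr_deriv ?_
  rw [logReturnDeriv2, div_eq_div_iff (pow_ne_zero 2 hP) (pow_ne_zero 2 hP)]
  ring

lemma strictAntiOn_logReturnDeriv (hL : 1 < L) :
    StrictAntiOn (logReturnDeriv L) (Ioi (log (1 - 1 / L))) := by
  intro s hs t ht hst
  have hPs := one_add_mul_exp_sub_one_pos hL hs
  have hPt := one_add_mul_exp_sub_one_pos hL ht
  rw [logReturnDeriv, logReturnDeriv, div_lt_div_iff₀ hPt hPs]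
  nlinarith [mul_pos (mul_pos (by linarith : (0:ℝ) < L) (by linarith : (0:ℝ) < L - 1))
    (sub_pos.2 (exp_lt_exp.2 hst))]

lemma monotoneOn_logReturnDeriv2 (hL : 1 < L) :
    MonotoneOn (logReturnDeriv2 L) (Ioi (log (1 - 1 / L))) := by
  intro s hs t ht hst
  have hPs := one_add_mul_exp_sub_one_pos hL hs
  have hPt := one_add_mul_exp_sub_one_pos hL ht
  have hd : 0 ≤ L * exp t - L * exp s :=
    sub_nonneg.2 (mul_le_mul_of_nonneg_left (exp_le_exp.2 hst) (by linarith))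
  have hp : 0 < (L * exp s) * (L * exp t) - (L - 1) * (L - 1) := by nlinarith
  -- cross-multiplied, the claim is `(L - 1) (u t - u s) (u s u t - (L - 1)²) ≥ 0` for `u = L exp`
  rw [logReturnDeriv2, logReturnDeriv2, div_le_div_iff₀ (pow_pos hPs 2) (pow_pos hPt 2)]
  nlinarith [mul_nonneg (mul_nonneg (by linarith : (0:ℝ) ≤ L - 1) hd) hp.le]

lemma logReturn_lt_tangent (hL : 1 < L) (hs : log (1 - 1 / L) < s) (hst : s < t) :
    logReturn L s < logReturn L t + logReturnDeriv L t * (s - t) := by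
  obtain ⟨η, ⟨hsη, hηt⟩, hη⟩ := exists_hasDerivAt_eq_slope (logReturn L) (logReturnDeriv L) hst
    (fun x hx ↦ (hasDerivAt_logReturn hL (hs.trans_le hx.1)).continuousAt.continuousWithinAt)
    fun x hx ↦ hasDerivAt_logReturn hL (hs.trans hx.1)
  rw [eq_div_iff (sub_pos.2 hst).ne'] at hη
  nlinarith [strictAntiOn_logReturnDeriv hL (hs.trans hsη) (hs.trans (hsη.trans hηt)) hηt]

variable {a b c y₀ y : ℝ}

theorem neg_of_interpolates (hL : 1 < L) (h₀ : log (1 - 1 / L) < y₀) (hy : y₀ < y)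
    (hq₀ : a * y₀ ^ 2 + b * y₀ + c = logReturn L y₀) (hq : a * y ^ 2 + b * y + c = logReturn L y)
    (hq' : 2 * a * y + b = logReturnDeriv L y) : a < 0 := by
  have key :
      a * (y₀ - y) ^ 2 = logReturn L y₀ - (logReturn L y + logReturnDeriv L y * (y₀ - y)) := by
    rw [← hq₀, ← hq, ← hq']
    ring
  nlinarith [logReturn_lt_tangent hL h₀ hy, pow_pos (sub_pos.2 hy) 2]

theorem quadratic_le_logReturn (hL : 1 < L) (h₀ : log (1 - 1 / L) < y₀) (hy : y₀ < y)
    (hq₀ : a * y₀ ^ 2 + b * y₀ + c = logReturn L y₀) (hq : a * y ^ 2 + b * y + c = logReturn L y)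
    (hq' : 2 * a * y + b = logReturnDeriv L y) {x : ℝ} (hx : y₀ ≤ x) :
    a * x ^ 2 + b * x + c ≤ logReturn L x := by
  have hdom {t : ℝ} (ht : t ∈ Ici y₀) : log (1 - 1 / L) < t := h₀.trans_le ht
  have hquad (t : ℝ) : HasDerivAt (fun t ↦ a * t ^ 2 + b * t + c) (2 * a * t + b) t := by
    refine ((((hasDerivAt_pow 2 t).const_mul a).add ((hasDerivAt_id' t).const_mul b)).add_const
      c).congr_deriv ?_
    ring
  have hg (t : ℝ) (ht : t ∈ Ici y₀) : HasDerivAt (fun t ↦ logReturn L t - (a * t ^ 2 + b * t + c))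
      (logReturnDeriv L t - (2 * a * t + b)) t :=
    (hasDerivAt_logReturn hL (hdom ht)).sub (hquad t)
  have hg' (t : ℝ) (ht : t ∈ Ici y₀) : HasDerivAt (fun t ↦ logReturnDeriv L t - (2 * a * t + b))
      (logReturnDeriv2 L t - 2 * a) t :=
    ((hasDerivAt_logReturnDeriv hL (hdom ht)).sub
      (((hasDerivAt_id' t).const_mul (2 * a)).add_const b)).congr_deriv (by rw [mul_one])
  have hconvex : ConvexOn ℝ (Ici y₀) fun t ↦ logReturnDeriv L t - (2 * a * t + b) :=
    convexOn_of_forall_hasDerivAt_of_monotoneOn (convex_Ici _) hg' fun s hs t ht hst ↦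
      sub_le_sub_right (monotoneOn_logReturnDeriv2 hL (hdom hs) (hdom ht) hst) _
  exact sub_nonneg.1 <|
    nonneg_of_convexOn_deriv_s18 hy hg hconvex (by simp [hq₀]) (by simp [hq]) (by simp [hq']) hx

theorem interpolates_of_coeff_eq (hL : 1 < L) (h₀ : log (1 - 1 / L) < y₀) (hy : y₀ < y)
    (ha : a = (1 / (y - y₀)) *
      (log ((1 + L * (exp y₀ - 1)) / (1 + L * (exp y - 1))) / (y - y₀)
        + L * exp y / (1 + L * (exp y - 1))))
    (hb : b = L * exp y / (1 + L * (exp y - 1)) - 2 * a * y)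
    (hc : c = log (1 + L * (exp y₀ - 1)) - a * y₀ ^ 2 - b * y₀) :
    a * y₀ ^ 2 + b * y₀ + c = logReturn L y₀ ∧ a * y ^ 2 + b * y + c = logReturn L y ∧
      2 * a * y + b = logReturnDeriv L y := by
  have ha' :
      a * (y - y₀) ^ 2 = logReturn L y₀ - logReturn L y + logReturnDeriv L y * (y - y₀) := by
    rw [ha, logReturn, logReturn, logReturnDeriv, ← log_div (one_add_mul_exp_sub_one_pos hL h₀).ne'
      (one_add_mul_exp_sub_one_pos hL (h₀.trans hy)).ne']
    field_simp [(sub_pos.2 hy).ne']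
  change b = logReturnDeriv L y - 2 * a * y at hb
  change c = logReturn L y₀ - a * y₀ ^ 2 - b * y₀ at hc
  refine ⟨by rw [hc]; ring, ?_, by rw [hb]; ring⟩
  rw [hc, hb]
  linear_combination -ha'

end LeveragedETF

open LeveragedETF

lemma natCast_mul_mean {n : ℕ} (x : Fin n → ℝ) : (n : ℝ) * ((1 / n) * ∑ i, x i) = ∑ i, x i := by
  rcases n with _ | n
  · simp
  · field_simp

theorem stmt_18_general (L L0 r y0 y1 y : ℝ) (hL : 1 < L)
    (h0 : Real.log (1 - 1 / L) < y0) (hy : y0 < y)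
    (n : ℕ) (Y : Fin n → ℝ) (hY : ∀ i, y0 ≤ Y i ∧ Y i ≤ y1)
    (a b c m1 m2 s : ℝ)
    (ha : a = (1 / (y - y0)) *
      (Real.log ((1 + L * (Real.exp y0 - 1)) / (1 + L * (Real.exp y - 1))) / (y - y0)
        + L * Real.exp y / (1 + L * (Real.exp y - 1))))
    (hb : b = L * Real.exp y / (1 + L * (Real.exp y - 1)) - 2 * a * y)
    (hc : c = Real.log (1 + L * (Real.exp y0 - 1)) - a * y0 ^ 2 - b * y0)
    (hm1 : m1 = (1 / (n : ℝ)) * ∑ i, Y i)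
    (hm2 : m2 = (1 / (n : ℝ)) * ∑ i, (Y i) ^ 2)
    (hs : s = Real.sqrt (m2 - m1 ^ 2))
    (hrad : 0 ≤ -m1 ^ 2 + ((L0 - b) / a) * m1 - (c - Real.log (1 + r / 252)) / a)
    (hsle : s ≤ Real.sqrt
      (-m1 ^ 2 + ((L0 - b) / a) * m1 - (c - Real.log (1 + r / 252)) / a)) :
    L0 * (n : ℝ) * m1 ≤
      (∑ i, Real.log (1 + L * (Real.exp (Y i) - 1))) -
        (n : ℝ) * Real.log (1 + r / 252) := by
  obtain ⟨hq₀, hq, hq'⟩ := interpolates_of_coeff_eq hL h0 hy ha hb hc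
  have ha_neg : a < 0 := neg_of_interpolates hL h0 hy hq₀ hq hq'
  set ℓ := Real.log (1 + r / 252)
  have hsq : m2 - m1 ^ 2 ≤ -m1 ^ 2 + ((L0 - b) / a) * m1 - (c - ℓ) / a :=
    (sqrt_le_sqrt_iff hrad).1 (hs ▸ hsle)
  have hmean : L0 * m1 + ℓ ≤ a * m2 + b * m1 + c := by
    have h : m2 ≤ ((L0 - b) * m1 - (c - ℓ)) / a := by
      rw [sub_div, mul_div_right_comm]
      linarith
    rw [le_div_iff_of_neg ha_neg] at h
    linarith
  have hsum : ∑ i, (a * Y i ^ 2 + b * Y i + c) ≤ ∑ i, logReturn L (Y i) :=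
    sum_le_sum fun i _ ↦ quadratic_le_logReturn hL h0 hy hq₀ hq hq' (hY i).1
  have e1 : (n : ℝ) * m1 = ∑ i, Y i := hm1 ▸ natCast_mul_mean Y
  have e2 : (n : ℝ) * m2 = ∑ i, Y i ^ 2 := hm2 ▸ natCast_mul_mean _
  calc L0 * n * m1 = n * (L0 * m1 + ℓ) - n * ℓ := by ring
    _ ≤ n * (a * m2 + b * m1 + c) - n * ℓ := by gcongr
    _ = ∑ i, (a * Y i ^ 2 + b * Y i + c) - n * ℓ := by
      rw [sum_add_distrib, sum_add_distrib, ← mul_sum, ← mul_sum, ← e1, ← e2, sum_const,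
        card_univ, Fintype.card_fin, nsmul_eq_mul]
      ring
    _ ≤ _ := sub_le_sub_right hsum _

theorem stmt_18 (L L0 r y0 y1 y : ℝ) (hL : 1 < L) (hL0 : L0 < L) (hr : 0 ≤ r)
    (h0 : Real.log (1 - 1 / L) < y0) (h01 : y0 < y1) (hy : y0 < y)
    (n : ℕ) (Y : Fin n → ℝ) (hY : ∀ i, y0 ≤ Y i ∧ Y i ≤ y1)
    (a b c m1 m2 s : ℝ)
    (ha : a = (1 / (y - y0)) *
      (Real.log ((1 + L * (Real.exp y0 - 1)) / (1 + L * (Real.exp y - 1))) / (y - y0)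
        + L * Real.exp y / (1 + L * (Real.exp y - 1))))
    (hb : b = L * Real.exp y / (1 + L * (Real.exp y - 1)) - 2 * a * y)
    (hc : c = Real.log (1 + L * (Real.exp y0 - 1)) - a * y0 ^ 2 - b * y0)
    (hm1 : m1 = (1 / (n : ℝ)) * ∑ i, Y i)
    (hm2 : m2 = (1 / (n : ℝ)) * ∑ i, (Y i) ^ 2)
    (hs : s = Real.sqrt (m2 - m1 ^ 2))
    (hrad : 0 ≤ -m1 ^ 2 + ((L0 - b) / a) * m1 - (c - Real.log (1 + r / 252)) / a)
    (hsle : s ≤ Real.sqrt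
      (-m1 ^ 2 + ((L0 - b) / a) * m1 - (c - Real.log (1 + r / 252)) / a)) :
    L0 * (n : ℝ) * m1 ≤
      (∑ i, Real.log (1 + L * (Real.exp (Y i) - 1))) -
        (n : ℝ) * Real.log (1 + r / 252) :=
  stmt_18_general L L0 r y0 y1 y hL h0 hy n Y hY a b c m1 m2 s ha hb hc hm1 hm2 hs hrad hsle
end
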